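/- For every 0 < ε < 1, the ellipse Ptolemy ratio p : ℝ⁴ → ℝ has a local maximum at the point (0, π/2, π, 3π/2): there is a neighborhood U of (0, π/2, π, 3π/2) in ℝ⁴ such that p(θ) ≤ p(0, π/2, π, 3π/2) = (2 − ε²)/(2√(1 − ε²)) for all θ ∈ U. -/

import Mathlib

open Real

/-- The point `(cos θ, √(1 - ε²) · sin θ)` on the ellipse `x² + y²/(1-ε²) = 1`. -/
noncomputable def ellipsePoint (ε θ : ℝ) : EuclideanSpace ℝ (Fin 2) :=
  !₂[Real.cos θ, Real.sqrt (1 - ε ^ 2) * Real.sin θ]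

/-- The Ptolemy ratio of four points in the Euclidean plane. -/
noncomputable def ptolemyRatio (v₁ v₂ v₃ v₄ : EuclideanSpace ℝ (Fin 2)) : ℝ :=
  (‖v₁ - v₂‖ * ‖v₃ - v₄‖ + ‖v₁ - v₄‖ * ‖v₂ - v₃‖) / (‖v₁ - v₃‖ * ‖v₂ - v₄‖)

/-- The ellipse Ptolemy ratio as a function of the four angles, `p : ℝ⁴ → ℝ`. -/
noncomputable def ellipseRatioFun (ε : ℝ) : EuclideanSpace ℝ (Fin 4) → ℝ :=
  fun θ => ptolemyRatio (ellipsePoint ε (θ 0)) (ellipsePoint ε (θ 1))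
    (ellipsePoint ε (θ 2)) (ellipsePoint ε (θ 3))

/-!
Writing `u = (a - b)/2` and `σ = (a + b)/2`, a chord of the ellipse has length
`2 |sin u| √(1 - ε² cos² σ)`. For each of the three pairings of the four angles, the product of
the two chords is `2 |cos (u - v) - cos (u + v)|` times a factor depending only on
`t = cos (Σ θᵢ / 2)` and on `cos (σ₁ - σ₂)`. With `x, y, z` the cosines of half of
`θ₁ + θ₂ - θ₃ - θ₄`, `θ₁ + θ₃ - θ₂ - θ₄`, `θ₁ + θ₄ - θ₂ - θ₃`, this turns `p` into
`(|z - y| G(x) + |y - x| G(z)) / (|z - x| G(y))` with `G(w) = √((1 - 2m)(1 - t²) + (m w - (1 - m) t)²)`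
and `m = ε²/2`. Near the vertices `x < y < z`. Bounding `G` above by the affine function
`1 - m - m t w` at `x` and `z`, and below at `y` by `√(1 - 2m)/(1 - m)` times the same affine
function, bounds the ratio by `(1 - m)/√(1 - 2m)`, which is its value at the vertices, where
`t = 0` and `(x, y, z) = (-1, 0, 1)`.
-/

theorem norm_ellipsePoint_sub {ε : ℝ} (hε : ε ^ 2 ≤ 1) (a b : ℝ) :
    ‖ellipsePoint ε a - ellipsePoint ε b‖ =
      2 * |sin ((a - b) / 2)| * √(1 - ε ^ 2 * cos ((a + b) / 2) ^ 2) := by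
  rw [EuclideanSpace.norm_eq, show 2 * |sin ((a - b) / 2)| = |2 * sin ((a - b) / 2)| by
    rw [abs_mul, abs_two], ← sqrt_sq_eq_abs, ← sqrt_mul (sq_nonneg _)]
  congr 1
  simp only [ellipsePoint, Fin.sum_univ_two, WithLp.ofLp_sub, Pi.sub_apply, norm_eq_abs, sq_abs,
    Matrix.cons_val_zero, Matrix.cons_val_one, ← mul_sub, mul_pow, sq_sqrt (sub_nonneg.2 hε),
    cos_sub_cos, sin_sub_sin]
  linear_combination (4 * sin ((a - b) / 2) ^ 2) * sin_sq_add_cos_sq ((a + b) / 2)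

noncomputable def ptolemyFactor (m t w : ℝ) : ℝ :=
  √((1 - 2 * m) * (1 - t ^ 2) + (m * w - (1 - m) * t) ^ 2)

theorem ptolemyFactor_cos_add_cos_sub (m σ₁ σ₂ : ℝ) :
    ptolemyFactor m (cos (σ₁ + σ₂)) (cos (σ₁ - σ₂)) =
      √((1 - 2 * m * cos σ₁ ^ 2) * (1 - 2 * m * cos σ₂ ^ 2)) := by
  rw [ptolemyFactor, cos_add, cos_sub]
  congr 1
  linear_combination (2 * m * sin σ₂ ^ 2) * sin_sq_add_cos_sq σ₁
    + (2 * m - 2 * m * cos σ₁ ^ 2) * sin_sq_add_cos_sq σ₂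

theorem norm_sub_mul_norm_sub {ε : ℝ} (hε : ε ^ 2 ≤ 1) (a b c d : ℝ) :
    ‖ellipsePoint ε a - ellipsePoint ε b‖ * ‖ellipsePoint ε c - ellipsePoint ε d‖ =
      2 * |cos ((a + d - b - c) / 2) - cos ((a + c - b - d) / 2)| *
        ptolemyFactor (ε ^ 2 / 2) (cos ((a + b + c + d) / 2)) (cos ((a + b - c - d) / 2)) := by
  have hF (σ : ℝ) : 0 ≤ 1 - ε ^ 2 * cos σ ^ 2 := by nlinarith [cos_sq_le_one σ]
  have hsin : cos ((a + d - b - c) / 2) - cos ((a + c - b - d) / 2) =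
      2 * sin ((a - b) / 2) * sin ((c - d) / 2) := by
    rw [show (a + d - b - c) / 2 = (a - b) / 2 - (c - d) / 2 by ring,
      show (a + c - b - d) / 2 = (a - b) / 2 + (c - d) / 2 by ring, cos_sub, cos_add]
    ring
  rw [hsin, show (a + b + c + d) / 2 = (a + b) / 2 + (c + d) / 2 by ring,
    show (a + b - c - d) / 2 = (a + b) / 2 - (c + d) / 2 by ring, ptolemyFactor_cos_add_cos_sub,
    show 2 * (ε ^ 2 / 2) = ε ^ 2 by ring, sqrt_mul (hF _), norm_ellipsePoint_sub hε,
    norm_ellipsePoint_sub hε, abs_mul, abs_mul, abs_two]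
  ring

noncomputable def ptolemyQuotient (m t x y z : ℝ) : ℝ :=
  (|z - y| * ptolemyFactor m t x + |y - x| * ptolemyFactor m t z) /
    (|z - x| * ptolemyFactor m t y)

theorem ptolemyRatio_ellipsePoint {ε : ℝ} (hε : ε ^ 2 ≤ 1) (a b c d : ℝ) :
    ptolemyRatio (ellipsePoint ε a) (ellipsePoint ε b) (ellipsePoint ε c) (ellipsePoint ε d) =
      ptolemyQuotient (ε ^ 2 / 2) (cos ((a + b + c + d) / 2)) (cos ((a + b - c - d) / 2))
        (cos ((a + c - b - d) / 2)) (cos ((a + d - b - c) / 2)) := by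
  rw [ptolemyRatio, norm_sub_mul_norm_sub hε, norm_sub_mul_norm_sub hε,
    norm_sub_mul_norm_sub hε, ptolemyQuotient,
    show a + d + b + c = a + b + c + d by ring, show a + c + b + d = a + b + c + d by ring,
    show a + c - d - b = a + c - b - d by ring, show a + b - d - c = a + b - c - d by ring,
    show a + d - c - b = a + d - b - c by ring]
  field_simp

section Bounds

variable {m t : ℝ}

theorem ptolemyFactor_le (hm : m ≤ 1 / 2) (ht : t ^ 2 ≤ 1) {w : ℝ}
    (hw : w ^ 2 ≤ 1) : ptolemyFactor m t w ≤ 1 - m - m * t * w := by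
  have htw : t * w ≤ 1 := by nlinarith [sq_nonneg (t - w)]
  have htw' : -1 ≤ t * w := by nlinarith [sq_nonneg (t + w)]
  refine sqrt_le_iff.2
    ⟨by nlinarith [mul_nonneg (sub_nonneg.2 hm) (by linarith : (0:ℝ) ≤ 1 + t * w)], ?_⟩
  -- the gap is `m² (1 - t²) (1 - w²)`
  nlinarith [mul_nonneg (mul_nonneg (sq_nonneg m) (sub_nonneg.2 ht)) (sub_nonneg.2 hw)]

theorem sqrt_mul_le_ptolemyFactor (hm₀ : 0 ≤ m) (hm : m ≤ 1 / 2) (ht : t ^ 2 ≤ 1) {y : ℝ}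
    (hy : y ^ 2 ≤ 1) : √(1 - 2 * m) * (1 - m - m * t * y) ≤ (1 - m) * ptolemyFactor m t y := by
  -- with `u = t y` the difference is `(1 - m)² (t² + y²) - 2m(1 - m) u - (1 - 2m) u²`,
  -- which is at least `(1 - 2m) |u| (2(1 - m) - |u|)`
  have hcore : (1 - m) ^ 2 * (1 - t ^ 2) * (1 - y ^ 2) ≤ (1 - m - m * t * y) ^ 2 := by
    have hu : |t * y| ≤ 1 := by
      rw [abs_mul]; nlinarith [abs_nonneg t, abs_nonneg y, sq_abs t, sq_abs y]
    have h2 : 2 * |t * y| ≤ t ^ 2 + y ^ 2 := by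
      rw [abs_mul]; nlinarith [sq_nonneg (|t| - |y|), sq_abs t, sq_abs y]
    nlinarith [mul_nonneg (mul_nonneg (by linarith : (0:ℝ) ≤ 1 - 2 * m) (abs_nonneg (t * y)))
      (by linarith : 0 ≤ 2 * (1 - m) - |t * y|), mul_le_mul_of_nonneg_left h2 (sq_nonneg (1 - m)),
      mul_le_mul_of_nonneg_left (le_abs_self (t * y)) (mul_nonneg hm₀ (by linarith : 0 ≤ 1 - m)),
      congrArg (fun s => (1 - 2 * m) * s) (sq_abs (t * y))]
  refine le_of_pow_le_pow_left₀ two_ne_zero (mul_nonneg (by linarith) (sqrt_nonneg _)) ?_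
  rw [ptolemyFactor, mul_pow, mul_pow, sq_sqrt (by linarith),
    sq_sqrt (add_nonneg (mul_nonneg (by linarith) (sub_nonneg.2 ht)) (sq_nonneg _))]
  linear_combination m ^ 2 * hcore

theorem sqrt_mul_ptolemy_numerator_le (hm₀ : 0 ≤ m) (hm : m ≤ 1 / 2) (ht : t ^ 2 ≤ 1)
    {x y z : ℝ} (hx : -1 ≤ x) (hxy : x ≤ y) (hyz : y ≤ z) (hz : z ≤ 1) :
    √(1 - 2 * m) * ((z - y) * ptolemyFactor m t x + (y - x) * ptolemyFactor m t z) ≤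
      (1 - m) * ((z - x) * ptolemyFactor m t y) := by
  have hsq (w : ℝ) (h₁ : -1 ≤ w) (h₂ : w ≤ 1) : w ^ 2 ≤ 1 := by nlinarith
  have hx' := mul_le_mul_of_nonneg_left (ptolemyFactor_le hm ht (hsq x hx (by linarith)))
    (sub_nonneg.2 hyz)
  have hz' := mul_le_mul_of_nonneg_left (ptolemyFactor_le hm ht (hsq z (by linarith) hz))
    (sub_nonneg.2 hxy)
  have hy' := mul_le_mul_of_nonneg_left
    (sqrt_mul_le_ptolemyFactor hm₀ hm ht (hsq y (by linarith) (by linarith)))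
    (sub_nonneg.2 (hxy.trans hyz))
  calc √(1 - 2 * m) * ((z - y) * ptolemyFactor m t x + (y - x) * ptolemyFactor m t z)
      ≤ √(1 - 2 * m) * ((z - x) * (1 - m - m * t * y)) := by
        gcongr
        linear_combination hx' + hz'
    _ ≤ (1 - m) * ((z - x) * ptolemyFactor m t y) := by linear_combination hy'

theorem ptolemyQuotient_le (hm₀ : 0 ≤ m) (hm : m < 1 / 2) (ht : t ^ 2 < 1) {x y z : ℝ}
    (hx : -1 ≤ x) (hxy : x ≤ y) (hyz : y ≤ z) (hz : z ≤ 1) (hxz : x < z) :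
    ptolemyQuotient m t x y z ≤ (1 - m) / √(1 - 2 * m) := by
  have hG : 0 < ptolemyFactor m t y :=
    sqrt_pos.2 (by nlinarith [sq_nonneg (m * y - (1 - m) * t)])
  rw [ptolemyQuotient, abs_of_nonneg (sub_nonneg.2 hyz), abs_of_nonneg (sub_nonneg.2 hxy),
    abs_of_pos (sub_pos.2 hxz), div_le_div_iff₀ (by positivity) (sqrt_pos.2 (by linarith))]
  linear_combination sqrt_mul_ptolemy_numerator_le hm₀ hm.le ht.le hx hxy hyz hz

theorem ptolemyQuotient_zero_neg_one_zero_one (hm : m ≤ 1) :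
    ptolemyQuotient m 0 (-1) 0 1 = (1 - m) / √(1 - 2 * m) := by
  have h (w : ℝ) (hw : w ^ 2 = 1) : ptolemyFactor m 0 w = 1 - m := by
    rw [ptolemyFactor, show (1 - 2 * m) * (1 - 0 ^ 2) + (m * w - (1 - m) * 0) ^ 2 = (1 - m) ^ 2 by
      linear_combination m ^ 2 * hw, sqrt_sq (by linarith)]
  rw [ptolemyQuotient, h 1 (one_pow 2), h (-1) (by norm_num), ptolemyFactor]
  norm_num
  ring

end Bounds

theorem one_sub_half_div_sqrt (k : ℝ) :
    (1 - k / 2) / √(1 - 2 * (k / 2)) = (2 - k) / (2 * √(1 - k)) := by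
  rw [show 2 * (k / 2) = k by ring]
  ring

theorem ptolemyRatio_ellipsePoint_le {ε : ℝ} (hε : ε ^ 2 < 1) {a b c d : ℝ}
    (hxy : cos ((a + b - c - d) / 2) ≤ cos ((a + c - b - d) / 2))
    (hyz : cos ((a + c - b - d) / 2) ≤ cos ((a + d - b - c) / 2))
    (hxz : cos ((a + b - c - d) / 2) < cos ((a + d - b - c) / 2))
    (ht : cos ((a + b + c + d) / 2) ^ 2 < 1) :
    ptolemyRatio (ellipsePoint ε a) (ellipsePoint ε b) (ellipsePoint ε c) (ellipsePoint ε d) ≤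
      (2 - ε ^ 2) / (2 * √(1 - ε ^ 2)) := by
  rw [ptolemyRatio_ellipsePoint hε.le, ← one_sub_half_div_sqrt]
  exact ptolemyQuotient_le (by positivity) (by linarith) ht (neg_one_le_cos _) hxy hyz
    (cos_le_one _) hxz

theorem cos_half_angles_vertices :
    cos ((0 + π / 2 + π + 3 * π / 2) / 2) = 0 ∧ cos ((0 + π / 2 - π - 3 * π / 2) / 2) = -1 ∧
      cos ((0 + π - π / 2 - 3 * π / 2) / 2) = 0 ∧ cos ((0 + 3 * π / 2 - π / 2 - π) / 2) = 1 := by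
  refine ⟨?_, ?_, ?_, ?_⟩
  · rw [show (0 + π / 2 + π + 3 * π / 2) / 2 = π / 2 + π by ring, cos_add_pi, cos_pi_div_two,
      neg_zero]
  · rw [show (0 + π / 2 - π - 3 * π / 2) / 2 = -π by ring, cos_neg, cos_pi]
  · rw [show (0 + π - π / 2 - 3 * π / 2) / 2 = -(π / 2) by ring, cos_neg, cos_pi_div_two]
  · rw [show (0 + 3 * π / 2 - π / 2 - π) / 2 = 0 by ring, cos_zero]

theorem ptolemyRatio_ellipsePoint_vertices {ε : ℝ} (hε : ε ^ 2 ≤ 1) :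
    ptolemyRatio (ellipsePoint ε 0) (ellipsePoint ε (π / 2)) (ellipsePoint ε π)
      (ellipsePoint ε (3 * π / 2)) = (2 - ε ^ 2) / (2 * √(1 - ε ^ 2)) := by
  obtain ⟨ht, hx, hy, hz⟩ := cos_half_angles_vertices
  rw [ptolemyRatio_ellipsePoint hε, ht, hx, hy, hz,
    ptolemyQuotient_zero_neg_one_zero_one (by linarith), one_sub_half_div_sqrt]

open Topology in
theorem eventually_cos_half_angles_lt {θ₀ : EuclideanSpace ℝ (Fin 4)}
    (hxy : cos ((θ₀ 0 + θ₀ 1 - θ₀ 2 - θ₀ 3) / 2) < cos ((θ₀ 0 + θ₀ 2 - θ₀ 1 - θ₀ 3) / 2))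
    (hyz : cos ((θ₀ 0 + θ₀ 2 - θ₀ 1 - θ₀ 3) / 2) < cos ((θ₀ 0 + θ₀ 3 - θ₀ 1 - θ₀ 2) / 2))
    (ht : cos ((θ₀ 0 + θ₀ 1 + θ₀ 2 + θ₀ 3) / 2) ^ 2 < 1) :
    ∀ᶠ θ in 𝓝 θ₀,
      cos ((θ 0 + θ 1 - θ 2 - θ 3) / 2) < cos ((θ 0 + θ 2 - θ 1 - θ 3) / 2) ∧
      cos ((θ 0 + θ 2 - θ 1 - θ 3) / 2) < cos ((θ 0 + θ 3 - θ 1 - θ 2) / 2) ∧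
      cos ((θ 0 + θ 1 + θ 2 + θ 3) / 2) ^ 2 < 1 := by
  have hX : Continuous fun θ : EuclideanSpace ℝ (Fin 4) => cos ((θ 0 + θ 1 - θ 2 - θ 3) / 2) := by
    fun_prop
  have hY : Continuous fun θ : EuclideanSpace ℝ (Fin 4) => cos ((θ 0 + θ 2 - θ 1 - θ 3) / 2) := by
    fun_prop
  have hZ : Continuous fun θ : EuclideanSpace ℝ (Fin 4) => cos ((θ 0 + θ 3 - θ 1 - θ 2) / 2) := by
    fun_prop
  have hT : Continuous fun θ : EuclideanSpace ℝ (Fin 4) =>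
      cos ((θ 0 + θ 1 + θ 2 + θ 3) / 2) ^ 2 := by
    fun_prop
  exact ((hX.tendsto _).eventually_lt (hY.tendsto _) hxy).and
    (((hY.tendsto _).eventually_lt (hZ.tendsto _) hyz).and
      ((hT.tendsto _).eventually_lt tendsto_const_nhds ht))

/-- `p` has a local maximum at `(0, π/2, π, 3π/2)`, with value `(2-ε²)/(2√(1-ε²))`. -/
theorem stmt6 (ε : ℝ) (hε0 : 0 < ε) (hε1 : ε < 1) :
    IsLocalMax (ellipseRatioFun ε)
        (!₂[0, π / 2, π, 3 * π / 2] : EuclideanSpace ℝ (Fin 4)) ∧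
      ellipseRatioFun ε (!₂[0, π / 2, π, 3 * π / 2] : EuclideanSpace ℝ (Fin 4)) =
        (2 - ε ^ 2) / (2 * Real.sqrt (1 - ε ^ 2)) := by
  have hε : ε ^ 2 < 1 := by nlinarith
  have hvalue : ellipseRatioFun ε !₂[0, π / 2, π, 3 * π / 2] =
      (2 - ε ^ 2) / (2 * √(1 - ε ^ 2)) := by
    simpa only [ellipseRatioFun, Matrix.cons_val] using ptolemyRatio_ellipsePoint_vertices hε.le
  refine ⟨?_, hvalue⟩
  obtain ⟨ht, hx, hy, hz⟩ := cos_half_angles_vertices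
  filter_upwards [eventually_cos_half_angles_lt (by simp only [Matrix.cons_val, hx, hy]; norm_num)
    (by simp only [Matrix.cons_val, hy, hz]; norm_num)
    (by simp only [Matrix.cons_val, ht]; norm_num)] with θ ⟨hxy, hyz, hθt⟩
  rw [hvalue]
  exact ptolemyRatio_ellipsePoint_le hε hxy.le hyz.le (hxy.trans hyz) hθt
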